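/- arXiv:1811.04485 — 2 statements merged into one kernel-verified Lean document; each statement's English description precedes it below -/
import Mathlib

section
/- Let Σ be a finite simplicial complex and let L be a valid interleaved removal sequence on Σ. If the operation at step i removes a pair (σ', τ') that is a coreduction pair in the remaining family at step i, and the operation at some later step j > i removes a pair (σ, τ) (a coreduction or reduction pair in the remaining family at step j), then σ is not an immediate face of τ'. (Condition 1 in the proof of Proposition 2: the last inserted pair is minimal with respect to the pairs already inserted that originate from coreductions.) -/
open Finset

variable {α : Type*}

/-- `σ` is an immediate face of `τ`. -/
def ImmFace (σ τ : Finset α) : Prop :=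
  σ ⊆ τ ∧ σ.card + 1 = τ.card

/-- A simplicial complex: a family of nonempty finsets closed under nonempty subsets. -/
def IsComplex (S : Set (Finset α)) : Prop :=
  (∀ σ ∈ S, σ.Nonempty) ∧ ∀ τ ∈ S, ∀ σ : Finset α, σ ⊆ τ → σ.Nonempty → σ ∈ S

/-- Immediate boundary of `τ` in the family `S`. -/
def bd (S : Set (Finset α)) (τ : Finset α) : Set (Finset α) :=
  {σ ∈ S | ImmFace σ τ}

/-- Immediate coboundary of `σ` in the family `S`. -/
def cbd (S : Set (Finset α)) (σ : Finset α) : Set (Finset α) :=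
  {τ ∈ S | ImmFace σ τ}

/-- `(σ, τ)` is a coreduction pair in `S`. -/
def CoredPair (S : Set (Finset α)) (σ τ : Finset α) : Prop :=
  σ ∈ S ∧ τ ∈ S ∧ ImmFace σ τ ∧ bd S τ = {σ}

/-- `(σ, τ)` is a reduction pair in `S`. -/
def RedPair (S : Set (Finset α)) (σ τ : Finset α) : Prop :=
  σ ∈ S ∧ τ ∈ S ∧ ImmFace σ τ ∧ cbd S σ = {τ}

/-- `σ` is a free simplex in `S`. -/
def FreeSimplex (S : Set (Finset α)) (σ : Finset α) : Prop :=
  σ ∈ S ∧ bd S σ = ∅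

/-- `σ` is a top simplex in `S`. -/
def TopSimplex (S : Set (Finset α)) (σ : Finset α) : Prop :=
  σ ∈ S ∧ cbd S σ = ∅

/-- `S'` is an upward-closed subfamily of `S`. -/
def UpClosedIn (S S' : Set (Finset α)) : Prop :=
  S' ⊆ S ∧ ∀ σ ∈ S', ∀ τ ∈ S, σ ⊆ τ → τ ∈ S'

/-- An operation: removal of a pair of simplices, or of a single simplex. -/
abbrev Op (α : Type*) := (Finset α × Finset α) ⊕ Finset α

/-- Excise the simplices of an operation from a family. -/
def removeOp (S : Set (Finset α)) : Op α → Set (Finset α)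
  | Sum.inl (σ, τ) => S \ {σ, τ}
  | Sum.inr σ => S \ {σ}

/-- Remaining family after performing a list of operations in order. -/
def remaining (S : Set (Finset α)) (L : List (Op α)) : Set (Finset α) :=
  L.foldl removeOp S

/-- A coreduction-based removal sequence: every pair is a coreduction pair and
every single simplex is free, in the current remaining family. -/
def IsCoredSeq (S : Set (Finset α)) : List (Op α) → Prop
  | [] => True
  | o :: L =>
      (match o with
        | Sum.inl (σ, τ) => CoredPair S σ τ
        | Sum.inr σ => FreeSimplex S σ) ∧ IsCoredSeq (removeOp S o) L

/-- A reduction-based removal sequence: every pair is a reduction pair and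
every single simplex is top, in the current remaining family. -/
def IsRedSeq (S : Set (Finset α)) : List (Op α) → Prop
  | [] => True
  | o :: L =>
      (match o with
        | Sum.inl (σ, τ) => RedPair S σ τ
        | Sum.inr σ => TopSimplex S σ) ∧ IsRedSeq (removeOp S o) L

/-- A valid interleaved removal sequence: every pair is a coreduction or
reduction pair, and every single simplex is free or top, in the current
remaining family. -/
def IsInterSeq (S : Set (Finset α)) : List (Op α) → Prop
  | [] => True
  | o :: L =>
      (match o with
        | Sum.inl (σ, τ) => CoredPair S σ τ ∨ RedPair S σ τ
        | Sum.inr σ => FreeSimplex S σ ∨ TopSimplex S σ) ∧ IsInterSeq (removeOp S o) L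

/-- A discrete vector field on `S`: pairs (face, immediate coface) of simplices of `S`,
each simplex of `S` belonging to at most one pair. -/
def IsDVF (S : Set (Finset α)) (V : Set (Finset α × Finset α)) : Prop :=
  (∀ p ∈ V, p.1 ∈ S ∧ p.2 ∈ S ∧ ImmFace p.1 p.2) ∧
  ∀ σ ∈ S, ∀ p ∈ V, ∀ q ∈ V,
    (σ = p.1 ∨ σ = p.2) → (σ = q.1 ∨ σ = q.2) → p = q

/-- A `V`-path: a nonempty sequence of pairs of `V` such that each `σ_{i+1}` is an
immediate face of `τ_i` different from `σ_i`. -/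
def IsVPath (V : Set (Finset α × Finset α)) (P : List (Finset α × Finset α)) : Prop :=
  P ≠ [] ∧ (∀ p ∈ P, p ∈ V) ∧
  P.Chain' (fun p q => ImmFace q.1 p.2 ∧ q.1 ≠ p.1)

/-- A closed `V`-path: `σ_1` is an immediate face of `τ_r` different from `σ_r`. -/
def IsClosedVPath (V : Set (Finset α × Finset α))
    (P : List (Finset α × Finset α)) : Prop :=
  ∃ hne : P ≠ [], IsVPath V P ∧
    ImmFace (P.head hne).1 (P.getLast hne).2 ∧
    (P.head hne).1 ≠ (P.getLast hne).1

/-- The lower star of a vertex `v` with respect to a vertex function `F`. -/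
def lowerStar (S : Set (Finset α)) (F : α → ℝ) (v : α) : Set (Finset α) :=
  {σ ∈ S | v ∈ σ ∧ ∀ w ∈ σ, F v ≤ F w}

lemma remaining_append (S : Set (Finset α)) (L₁ L₂ : List (Op α)) :
    remaining S (L₁ ++ L₂) = remaining (remaining S L₁) L₂ :=
  List.foldl_append ..

lemma removeOp_subset (S : Set (Finset α)) (o : Op α) : removeOp S o ⊆ S := by
  cases o <;> exact Set.sdiff_subset

lemma remaining_subset (S : Set (Finset α)) (L : List (Op α)) : remaining S L ⊆ S := by
  induction L generalizing S with
  | nil => exact subset_rfl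
  | cons o L ih => exact (ih _).trans (removeOp_subset S o)

lemma remaining_take_subset_of_le (S : Set (Finset α)) (L : List (Op α)) {m n : ℕ}
    (hmn : m ≤ n) : remaining S (L.take n) ⊆ remaining S (L.take m) := by
  have hsplit : L.take n = L.take m ++ (L.drop m).take (n - m) := by
    rw [← List.take_add, Nat.add_sub_cancel' hmn]
  rw [hsplit, remaining_append]
  exact remaining_subset _ _

lemma remaining_take_succ (S : Set (Finset α)) {L : List (Op α)} {i : ℕ} {o : Op α}
    (hi : L[i]? = some o) :
    remaining S (L.take (i + 1)) = removeOp (remaining S (L.take i)) o := by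
  rw [List.take_add_one, hi, remaining_append]
  rfl

lemma IsInterSeq.drop {S : Set (Finset α)} {L : List (Op α)} (hL : IsInterSeq S L) (n : ℕ) :
    IsInterSeq (remaining S (L.take n)) (L.drop n) := by
  induction L generalizing S n with
  | nil => simp only [List.take_nil, List.drop_nil]; trivial
  | cons o L ih =>
    cases n with
    | zero => exact hL
    | succ n => exact ih hL.2 n

lemma IsInterSeq.fst_mem_remaining {S : Set (Finset α)} {L : List (Op α)}
    (hL : IsInterSeq S L) {j : ℕ} {σ τ : Finset α} (hj : L[j]? = some (Sum.inl (σ, τ))) :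
    σ ∈ remaining S (L.take j) := by
  obtain ⟨hlt, hget⟩ := List.getElem?_eq_some_iff.mp hj
  have hdrop : L.drop j = Sum.inl (σ, τ) :: L.drop (j + 1) := by
    rw [List.drop_eq_getElem_cons hlt, hget]
  exact (hdrop ▸ hL.drop j).1.elim (·.1) (·.1)

lemma CoredPair.not_immFace_of_mem_removeOp {S : Set (Finset α)} {σ' τ' σ : Finset α}
    (h : CoredPair S σ' τ') (hσ : σ ∈ removeOp S (Sum.inl (σ', τ'))) : ¬ ImmFace σ τ' := by
  intro hface
  have hbd : σ ∈ bd S τ' := ⟨hσ.1, hface⟩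
  rw [h.2.2.2] at hbd
  exact hσ.2 (Or.inl hbd)

theorem interleaved_coreduction_minimal_general {α : Type*}
    (S : Set (Finset α))
    (L : List (Op α)) (hL : IsInterSeq S L)
    (i j : ℕ) (hij : i < j) (σ' τ' σ τ : Finset α)
    (hi : L[i]? = some (Sum.inl (σ', τ')))
    (hcored : CoredPair (remaining S (L.take i)) σ' τ')
    (hj : L[j]? = some (Sum.inl (σ, τ))) :
    ¬ ImmFace σ τ' := by
  have hσ : σ ∈ remaining S (L.take (i + 1)) :=
    remaining_take_subset_of_le S L hij (hL.fst_mem_remaining hj)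
  rw [remaining_take_succ S hi] at hσ
  exact hcored.not_immFace_of_mem_removeOp hσ

/-- Condition 1 in the proof of Proposition 2: if step `i` of a valid interleaved
removal sequence removes a coreduction pair `(σ', τ')` and a later step `j > i`
removes a pair `(σ, τ)`, then `σ` is not an immediate face of `τ'`. -/
theorem interleaved_coreduction_minimal {α : Type*} [DecidableEq α]
    (S : Set (Finset α)) (hS : IsComplex S) (hfin : S.Finite)
    (L : List (Op α)) (hL : IsInterSeq S L)
    (i j : ℕ) (hij : i < j) (σ' τ' σ τ : Finset α)
    (hi : L[i]? = some (Sum.inl (σ', τ')))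
    (hcored : CoredPair (remaining S (L.take i)) σ' τ')
    (hj : L[j]? = some (Sum.inl (σ, τ))) :
    ¬ ImmFace σ τ' :=
  interleaved_coreduction_minimal_general S L hL i j hij σ' τ' σ τ hi hcored hj
end

section
/- Let Σ be a finite simplicial complex and let L be an exhausting valid interleaved removal sequence on Σ. Then there exists an exhausting reduction-based removal sequence on Σ (using only reduction pairs and top simplices) that removes exactly the same set of pairs and exactly the same set of single (critical) simplices as L; in particular it produces the same Forman gradient. (Proposition 3, reduction version.) -/
open Finset

variable {α : Type*}

/-!
Reorder the operations of `L` greedily. In the family `U` of simplices of the operations not yet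
scheduled, let `d` be the maximal dimension. A critical `d`-simplex is top in `U`; otherwise every
`d`-simplex is the top `τ` of a pair `(σ, τ)`, and if none of these is a reduction pair in `U`,
each of them has `σ` below the top `τ'` of another such pair. No set of pairs of `L` can have this
property: at the first of them performed in `L`, a reduction pair would still see `τ'` above `σ`,
while a coreduction pair has no other pair of the set above it and can be discarded.
-/

def opSet : Op α → Set (Finset α)
  | Sum.inl p => {p.1, p.2}
  | Sum.inr σ => {σ}

def opUnion (O : Finset (Op α)) : Set (Finset α) :=
  ⋃ o ∈ O, opSet o

def ValidInterOp (S : Set (Finset α)) : Op α → Prop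
  | Sum.inl (σ, τ) => CoredPair S σ τ ∨ RedPair S σ τ
  | Sum.inr σ => FreeSimplex S σ ∨ TopSimplex S σ

def ValidRedOp (S : Set (Finset α)) : Op α → Prop
  | Sum.inl (σ, τ) => RedPair S σ τ
  | Sum.inr σ => TopSimplex S σ

lemma removeOp_eq_diff (S : Set (Finset α)) (o : Op α) : removeOp S o = S \ opSet o := by
  rcases o with ⟨σ, τ⟩ | σ <;> rfl

lemma opSet_nonempty (o : Op α) : (opSet o).Nonempty := by
  rcases o with p | σ
  · exact Set.insert_nonempty p.1 {p.2}
  · exact Set.singleton_nonempty σ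

lemma opSet_finite (o : Op α) : (opSet o).Finite := by
  rcases o with p | σ
  · exact Set.toFinite {p.1, p.2}
  · exact Set.finite_singleton σ

lemma mem_opUnion {O : Finset (Op α)} {x : Finset α} :
    x ∈ opUnion O ↔ ∃ o ∈ O, x ∈ opSet o := by
  simp [opUnion]

lemma opUnion_finite (O : Finset (Op α)) : (opUnion O).Finite :=
  O.finite_toSet.biUnion fun o _ => opSet_finite o

lemma remaining_cons (S : Set (Finset α)) (o : Op α) (L : List (Op α)) :
    remaining S (o :: L) = remaining (removeOp S o) L :=
  rfl

lemma remaining_eq_diff (S : Set (Finset α)) (L : List (Op α)) :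
    remaining S L = S \ ⋃ o ∈ L, opSet o := by
  induction L generalizing S with
  | nil => simp [remaining]
  | cons o L ih =>
    rw [remaining_cons, ih, removeOp_eq_diff, Set.sdiff_sdiff]
    simp

lemma removeOp_opUnion [DecidableEq α] {P : Finset (Op α)}
    (hP : ∀ o ∈ P, ∀ o' ∈ P, ∀ x ∈ opSet o, x ∈ opSet o' → o = o') {o : Op α} (ho : o ∈ P) :
    removeOp (opUnion P) o = opUnion (P.erase o) := by
  ext x
  simp only [removeOp_eq_diff, Set.mem_sdiff, mem_opUnion, Finset.mem_erase]
  constructor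
  · rintro ⟨⟨o', ho', hx⟩, hxo⟩
    exact ⟨o', ⟨by rintro rfl; exact hxo hx, ho'⟩, hx⟩
  · rintro ⟨o', ⟨hne, ho'⟩, hx⟩
    exact ⟨⟨o', ho', hx⟩, fun hxo => hne (hP o' ho' o ho x hx hxo)⟩

lemma topSimplex_of_forall_card_le {U : Set (Finset α)} {ρ : Finset α} (hρ : ρ ∈ U)
    (hmax : ∀ x ∈ U, x.card ≤ ρ.card) : TopSimplex U ρ :=
  ⟨hρ, Set.eq_empty_of_forall_notMem fun τ hτ => by
    have := hmax τ hτ.1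
    have := hτ.2.2
    omega⟩

lemma isInterSeq_cons {S : Set (Finset α)} {o : Op α} {L : List (Op α)} :
    IsInterSeq S (o :: L) ↔ ValidInterOp S o ∧ IsInterSeq (removeOp S o) L := by
  rcases o with ⟨σ, τ⟩ | σ <;> rfl

lemma isRedSeq_cons {S : Set (Finset α)} {o : Op α} {L : List (Op α)} :
    IsRedSeq S (o :: L) ↔ ValidRedOp S o ∧ IsRedSeq (removeOp S o) L := by
  rcases o with ⟨σ, τ⟩ | σ <;> rfl

lemma ValidInterOp.opSet_subset {S : Set (Finset α)} {o : Op α} (h : ValidInterOp S o) :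
    opSet o ⊆ S := by
  rcases o with ⟨σ, τ⟩ | σ
  · rcases h with h | h <;> exact Set.insert_subset h.1 (Set.singleton_subset_iff.2 h.2.1)
  · rcases h with h | h <;> exact Set.singleton_subset_iff.2 h.1

lemma ValidInterOp.immFace {S : Set (Finset α)} {σ τ : Finset α}
    (h : ValidInterOp S (Sum.inl (σ, τ))) : ImmFace σ τ := by
  rcases h with h | h
  exacts [h.2.2.1, h.2.2.1]

namespace IsInterSeq

variable {S : Set (Finset α)} {L : List (Op α)}

lemma opSet_subset (hL : IsInterSeq S L) {o : Op α} (ho : o ∈ L) : opSet o ⊆ S := by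
  induction L generalizing S with
  | nil => simp at ho
  | cons a L ih =>
    rw [isInterSeq_cons] at hL
    rcases List.mem_cons.1 ho with rfl | ho
    · exact hL.1.opSet_subset
    · exact (ih hL.2 ho).trans (removeOp_eq_diff S a ▸ Set.sdiff_subset)

lemma immFace (hL : IsInterSeq S L) {σ τ : Finset α} (ho : Sum.inl (σ, τ) ∈ L) :
    ImmFace σ τ := by
  induction L generalizing S with
  | nil => simp at ho
  | cons a L ih =>
    rw [isInterSeq_cons] at hL
    rcases List.mem_cons.1 ho with rfl | ho
    · exact hL.1.immFace
    · exact ih hL.2 ho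

lemma eq_of_mem_opSet (hL : IsInterSeq S L) {o o' : Op α} (ho : o ∈ L) (ho' : o' ∈ L)
    {x : Finset α} (hx : x ∈ opSet o) (hx' : x ∈ opSet o') : o = o' := by
  induction L generalizing S with
  | nil => simp at ho
  | cons a L ih =>
    rw [isInterSeq_cons] at hL
    have later {b : Op α} (hb : b ∈ L) (hxb : x ∈ opSet b) : x ∉ opSet a := by
      have := hL.2.opSet_subset hb hxb
      rw [removeOp_eq_diff] at this
      exact this.2
    rcases List.mem_cons.1 ho with rfl | hoL <;> rcases List.mem_cons.1 ho' with rfl | ho'L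
    · rfl
    · exact absurd hx (later ho'L hx')
    · exact absurd hx' (later hoL hx)
    · exact ih hL.2 hoL ho'L

lemma eq_empty_of_forall_exists_pair_above (hL : IsInterSeq S L)
    {C : Set (Finset α × Finset α)} (hCL : ∀ p ∈ C, Sum.inl p ∈ L)
    (hC : ∀ p ∈ C, ∃ q ∈ C, q ≠ p ∧ ImmFace p.1 q.2) : C = ∅ := by
  induction L generalizing S C with
  | nil => exact Set.eq_empty_of_forall_notMem fun p hp => by simpa using hCL p hp
  | cons a L ih =>
    rw [isInterSeq_cons] at hL
    obtain ⟨ha, hL⟩ := hL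
    have later {q} (hqC : q ∈ C) (hq : Sum.inl q ≠ a) : opSet (Sum.inl q) ⊆ S \ opSet a :=
      removeOp_eq_diff S a ▸ hL.opSet_subset ((List.mem_cons.1 (hCL q hqC)).resolve_left hq)
    by_cases haC : ∃ p ∈ C, Sum.inl p = a
    swap
    · simp only [not_exists, not_and] at haC
      exact ih hL (fun p hp => (List.mem_cons.1 (hCL p hp)).resolve_left (haC p hp)) hC
    obtain ⟨⟨σ, τ⟩, hpC, rfl⟩ := haC
    rcases ha with hcored | hred
    · -- a pair of `C` above `(σ, τ)` would give `τ` a second face besides `σ`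
      have hC' : C \ {(σ, τ)} = ∅ := by
        refine ih hL (fun r hr => ?_) (fun r hr => ?_)
        · exact (List.mem_cons.1 (hCL r hr.1)).resolve_left (Sum.inl_injective.ne hr.2)
        obtain ⟨q, hqC, hqr, hrq⟩ := hC r hr.1
        refine ⟨q, ⟨hqC, ?_⟩, hqr, hrq⟩
        rintro rfl
        have hr1 := later hr.1 (Sum.inl_injective.ne hr.2) (Or.inl rfl)
        have hbd : r.1 ∈ bd S τ := ⟨hr1.1, hrq⟩
        rw [hcored.2.2.2] at hbd
        exact hr1.2 (Or.inl hbd)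
      obtain ⟨q, hqC, hqp, -⟩ := hC _ hpC
      exact (Set.eq_empty_iff_forall_notMem.1 hC' q ⟨hqC, hqp⟩).elim
    · obtain ⟨q, hqC, hqp, hpq⟩ := hC _ hpC
      have hq2 := later hqC (Sum.inl_injective.ne hqp) (Or.inr rfl)
      have hcbd : q.2 ∈ cbd S σ := ⟨hq2.1, hpq⟩
      rw [hred.2.2.2] at hcbd
      exact (hq2.2 (Or.inr hcbd)).elim

lemma exists_validRedOp (hL : IsInterSeq S L) {O : Finset (Op α)} (hOL : ∀ o ∈ O, o ∈ L)
    (hO : O.Nonempty) : ∃ o ∈ O, ValidRedOp (opUnion O) o := by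
  have hU : (opUnion O).Nonempty := by
    obtain ⟨o, ho⟩ := hO
    obtain ⟨x, hx⟩ := opSet_nonempty o
    exact ⟨x, mem_opUnion.2 ⟨o, ho, hx⟩⟩
  obtain ⟨ρ, hρ, hmax⟩ := Set.exists_max_image (opUnion O) Finset.card (opUnion_finite O) hU
  by_contra! hno
  have pair_of_card_eq : ∀ x ∈ opUnion O, x.card = ρ.card → ∃ σ, Sum.inl (σ, x) ∈ O := by
    intro x hx hxρ
    obtain ⟨o, ho, hxo⟩ := mem_opUnion.1 hx
    rcases o with ⟨σ, τ⟩ | σ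
    · rcases hxo with rfl | rfl
      · have := hmax τ (mem_opUnion.2 ⟨_, ho, Or.inr rfl⟩)
        have := (hL.immFace (hOL _ ho)).2
        omega
      · exact ⟨σ, ho⟩
    · obtain rfl : x = σ := hxo
      exact (hno _ ho (topSimplex_of_forall_card_le hx (hxρ ▸ hmax))).elim
  have hC : {p : Finset α × Finset α | Sum.inl p ∈ O ∧ p.2.card = ρ.card} = ∅ := by
    refine hL.eq_empty_of_forall_exists_pair_above (fun p hp => hOL _ hp.1) ?_
    rintro ⟨σ, τ⟩ ⟨hp, hτ⟩
    have hpair : ImmFace σ τ := hL.immFace (hOL _ hp)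
    have hσU : σ ∈ opUnion O := mem_opUnion.2 ⟨_, hp, Or.inl rfl⟩
    have hτU : τ ∈ opUnion O := mem_opUnion.2 ⟨_, hp, Or.inr rfl⟩
    have hcbd : cbd (opUnion O) σ ≠ {τ} := fun h => hno _ hp ⟨hσU, hτU, hpair, h⟩
    obtain ⟨τ', hτ', hτ'τ⟩ : ∃ τ' ∈ cbd (opUnion O) σ, τ' ≠ τ := by
      by_contra! h
      exact hcbd (Set.eq_singleton_iff_unique_mem.2 ⟨⟨hτU, hpair⟩, h⟩)
    have hτ'ρ : τ'.card = ρ.card := by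
      have := hτ'.2.2
      have := hpair.2
      simp only at hτ
      omega
    obtain ⟨σ', hσ'⟩ := pair_of_card_eq τ' hτ'.1 hτ'ρ
    exact ⟨(σ', τ'), ⟨hσ', hτ'ρ⟩, fun h => hτ'τ (congrArg Prod.snd h), hτ'.2⟩
  obtain ⟨σ, hσ⟩ := pair_of_card_eq ρ hρ rfl
  exact hC.subset ⟨hσ, rfl⟩

lemma opUnion_toFinset [DecidableEq α] (hL : IsInterSeq S L) (hex : remaining S L = ∅) :
    opUnion L.toFinset = S := by
  ext x
  simp only [mem_opUnion, List.mem_toFinset]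
  constructor
  · rintro ⟨o, ho, hx⟩
    exact hL.opSet_subset ho hx
  · intro hx
    by_contra h
    have hrem : x ∈ remaining S L := by
      rw [remaining_eq_diff]
      exact ⟨hx, by simpa using h⟩
    simp [hex] at hrem

end IsInterSeq

lemma exists_isRedSeq_opUnion (P : Finset (Op α))
    (hP : ∀ o ∈ P, ∀ o' ∈ P, ∀ x ∈ opSet o, x ∈ opSet o' → o = o')
    (hvalid : ∀ O ⊆ P, O.Nonempty → ∃ o ∈ O, ValidRedOp (opUnion O) o) :
    ∃ M : List (Op α), IsRedSeq (opUnion P) M ∧ remaining (opUnion P) M = ∅ ∧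
      ∀ o, o ∈ M ↔ o ∈ P := by
  classical
  induction P using Finset.strongInduction with
  | H P ih =>
  rcases P.eq_empty_or_nonempty with rfl | hne
  · exact ⟨[], trivial, by simp [remaining, opUnion], by simp⟩
  obtain ⟨o, ho, hvo⟩ := hvalid P subset_rfl hne
  have hrem := removeOp_opUnion hP ho
  obtain ⟨M, hM, hMrem, hMmem⟩ := ih (P.erase o) (P.erase_ssubset ho)
    (fun o₁ h₁ o₂ h₂ => hP o₁ (P.mem_of_mem_erase h₁) o₂ (P.mem_of_mem_erase h₂))
    (fun O hO => hvalid O (hO.trans (P.erase_subset o)))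
  refine ⟨o :: M, isRedSeq_cons.2 ⟨hvo, hrem ▸ hM⟩, by rw [remaining_cons, hrem]; exact hMrem,
    fun o' => ?_⟩
  rw [List.mem_cons, hMmem, Finset.mem_erase]
  by_cases h : o' = o <;> simp [h, ho]

theorem interleaved_to_reduction_seq_general {α : Type*}
    (S : Set (Finset α))
    (L : List (Op α)) (hL : IsInterSeq S L) (hex : remaining S L = ∅) :
    ∃ L' : List (Op α), IsRedSeq S L' ∧ remaining S L' = ∅ ∧
      (∀ p : Finset α × Finset α, Sum.inl p ∈ L' ↔ Sum.inl p ∈ L) ∧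
      (∀ σ : Finset α, Sum.inr σ ∈ L' ↔ Sum.inr σ ∈ L) := by
  classical
  obtain ⟨M, hM, hMrem, hMmem⟩ := exists_isRedSeq_opUnion L.toFinset
    (fun o ho o' ho' x hx hx' =>
      hL.eq_of_mem_opSet (List.mem_toFinset.1 ho) (List.mem_toFinset.1 ho') hx hx')
    (fun O hO hne => hL.exists_validRedOp (fun o ho => List.mem_toFinset.1 (hO ho)) hne)
  rw [hL.opUnion_toFinset hex] at hM hMrem
  exact ⟨M, hM, hMrem, fun p => (hMmem _).trans List.mem_toFinset,
    fun σ => (hMmem _).trans List.mem_toFinset⟩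

/-- Proposition 3, reduction version: any exhausting valid interleaved removal
sequence can be replaced by an exhausting reduction-based removal sequence that
removes exactly the same pairs and the same single (critical) simplices. -/
theorem interleaved_to_reduction_seq {α : Type*} [DecidableEq α]
    (S : Set (Finset α)) (hS : IsComplex S) (hfin : S.Finite)
    (L : List (Op α)) (hL : IsInterSeq S L) (hex : remaining S L = ∅) :
    ∃ L' : List (Op α), IsRedSeq S L' ∧ remaining S L' = ∅ ∧
      (∀ p : Finset α × Finset α, Sum.inl p ∈ L' ↔ Sum.inl p ∈ L) ∧
      (∀ σ : Finset α, Sum.inr σ ∈ L' ↔ Sum.inr σ ∈ L) :=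
  interleaved_to_reduction_seq_general S L hL hex
end
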